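/- Let E : 𝓗 → ℝ be C², R : 𝓗 → 𝓗 a retraction satisfying the retraction assumption, 0 < β ≤ β₀ with β₀ as in the global energy-decrease result, and P⁰ ∈ 𝓜_N. Let (P^k) be the gradient-descent iterates P^{k+1} = R(P^k − βΠ_{P^k}(∇E(P^k))) and let E_c = lim_k E(P^k). Then there exists a connected component A_c of the critical set C(E_c) = {P ∈ 𝓜_N : E(P) = E_c and Π_P(∇E(P)) = 0} such that dist(P^k, A_c) → 0 as k → ∞. -/

import Mathlib

open Matrix Filter Topology
open scoped BigOperators

attribute [local instance] Matrix.normedAddCommGroup Matrix.normedSpace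

noncomputable section

/-- Square real matrices of size `n`. -/
abbrev Mat (n : ℕ) := Matrix (Fin n) (Fin n) ℝ

/-- Frobenius inner product `⟨A, B⟩ = Tr(AᵀB)`. -/
def frobInner {n : ℕ} (A B : Mat n) : ℝ := (Aᵀ * B).trace

/-- Frobenius norm. -/
def frobNorm {n : ℕ} (A : Mat n) : ℝ := Real.sqrt ((Aᵀ * A).trace)

/-- The manifold `𝓜_N` of rank-`N` symmetric orthogonal projectors. -/
def projSet (n N : ℕ) : Set (Mat n) := {P | P.IsSymm ∧ P * P = P ∧ P.trace = (N : ℝ)}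

/-- The tangent space `T_P 𝓜_N`. -/
def tangentSet {n : ℕ} (P : Mat n) : Set (Mat n) :=
  {X | X.IsSymm ∧ P * X + X * P = X ∧ X.trace = 0}

/-- The projection `Π_P(X) = P X (1 − P) + (1 − P) X P` onto the tangent space. -/
def piT {n : ℕ} (P X : Mat n) : Mat n := P * X * (1 - P) + (1 - P) * X * P

/-- The operator `Ω_* X = −[P, [H, X]]`. -/
def OmegaOp {n : ℕ} (P H X : Mat n) : Mat n :=
  -(P * (H * X - X * H) - (H * X - X * H) * P)

/-! The cluster points of the iterates form a nonempty compact set `L` which the iterates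
approach. Each of them is critical at level `E_c`, by continuity of `E` and of
`P ↦ Π_P ∇E(P)` (the symmetric gradient is read off the continuous derivative). Since the
steps tend to `0`, the iterates cannot keep travelling between two separated parts of `L`,
so `L` is connected and lies in a single component of `C(E_c)`. -/

open Metric

theorem MapClusterPt.apply_eq_of_tendsto {α X Y : Type*} [TopologicalSpace X]
    [TopologicalSpace Y] [T2Space Y] {F : Filter α} {u : α → X} {x : X} {f : X → Y} {y : Y}
    (hx : MapClusterPt x F u) (hf : ContinuousAt f x) (hfu : Tendsto (f ∘ u) F (𝓝 y)) :
    f x = y := by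
  by_contra hne
  exact clusterPt_iff_not_disjoint.1 ((hx.continuousAt_comp hf).clusterPt.mono hfu)
    (disjoint_nhds_nhds.2 hne)

theorem Filter.eventually_atTop_of_frequently_of_eventually_imp_succ {p : ℕ → Prop}
    (hfreq : ∃ᶠ k in atTop, p k) (hsucc : ∀ᶠ k in atTop, p k → p (k + 1)) :
    ∀ᶠ k in atTop, p k := by
  obtain ⟨N, hN⟩ := eventually_atTop.1 hsucc
  obtain ⟨m, hmN, hm⟩ := frequently_atTop.1 hfreq N
  refine eventually_atTop.2 ⟨m, fun k hk => ?_⟩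
  induction k, hk using Nat.le_induction with
  | base => exact hm
  | succ k hmk ih => exact hN k (hmN.trans hmk) ih

theorem IsCompact.tendsto_nhdsSet_setOf_mapClusterPt {α X : Type*} [TopologicalSpace X]
    {l : Filter α} {K : Set X} (hK : IsCompact K) {u : α → X} (hu : ∀ k, u k ∈ K) :
    Tendsto u l (𝓝ˢ {x | MapClusterPt x l u}) :=
  hK.tendsto_nhdsSet_of_mapClusterPt (.of_forall hu) fun _ _ hx => hx

theorem isPreconnected_setOf_mapClusterPt_of_tendsto_dist_succ {α : Type*} [MetricSpace α]
    {K : Set α} (hK : IsCompact K) {u : ℕ → α} (hu : ∀ k, u k ∈ K)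
    (hstep : Tendsto (fun k => dist (u (k + 1)) (u k)) atTop (𝓝 0)) :
    IsPreconnected {x | MapClusterPt x atTop u} := by
  set L := {x | MapClusterPt x atTop u}
  have hLK : L ⊆ K := fun x hx => hK.isClosed.mem_of_mapClusterPt hx (Eventually.of_forall hu)
  have hL : IsCompact L := hK.of_isClosed_subset isClosed_setOfPred_clusterPt hLK
  rw [isPreconnected_closed_iff]
  intro t t' ht ht' hLtt' ⟨a, haL, hat⟩ ⟨b, hbL, hbt'⟩
  by_contra hempty
  have hdisj : Disjoint (L ∩ t) (L ∩ t') :=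
    Set.disjoint_left.2 fun x ⟨hxL, hxt⟩ ⟨_, hxt'⟩ => hempty ⟨x, hxL, hxt, hxt'⟩
  obtain ⟨δ, hδ, hsep⟩ := hdisj.exists_thickenings (hL.inter_right ht) (hL.isClosed.inter ht')
  set A := thickening (δ / 2) (L ∩ t)
  set B := thickening (δ / 2) (L ∩ t')
  have hAB : ∀ x ∈ A, x ∉ B := fun x hxA hxB =>
    hsep.ne_of_mem (thickening_mono (by linarith) _ hxA) (thickening_mono (by linarith) _ hxB) rfl
  have hcover : ∀ᶠ k in atTop, u k ∈ A ∪ B := by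
    have hLAB : thickening (δ / 2) L ⊆ A ∪ B := by
      rw [← thickening_union, ← Set.inter_union_distrib_left]
      exact thickening_subset_of_subset _ (Set.subset_inter subset_rfl hLtt')
    exact hK.tendsto_nhdsSet_setOf_mapClusterPt hu <| mem_of_superset
      (isOpen_thickening.mem_nhdsSet.2 (self_subset_thickening (half_pos hδ) L)) hLAB
  have hstay : ∀ᶠ k in atTop, u k ∈ A → u (k + 1) ∈ A := by
    filter_upwards [hstep.eventually_lt_const (half_pos hδ),
      (tendsto_add_atTop_nat 1).eventually hcover] with k hk hk1 hkA
    refine hk1.resolve_right fun hk1B => ?_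
    obtain ⟨z, hz, hdz⟩ := mem_thickening_iff.1 hkA
    have hk1A : u (k + 1) ∈ thickening δ (L ∩ t) :=
      mem_thickening_iff.2 ⟨z, hz, by linarith [dist_triangle (u (k + 1)) (u k) z]⟩
    exact hsep.ne_of_mem hk1A (thickening_mono (by linarith) _ hk1B) rfl
  have hfreqA : ∃ᶠ k in atTop, u k ∈ A := haL.frequently <|
    isOpen_thickening.mem_nhds (self_subset_thickening (half_pos hδ) _ ⟨haL, hat⟩)
  have hfreqB : ∃ᶠ k in atTop, u k ∈ B := hbL.frequently <|
    isOpen_thickening.mem_nhds (self_subset_thickening (half_pos hδ) _ ⟨hbL, hbt'⟩)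
  have hevA : ∀ᶠ k in atTop, u k ∈ A :=
    eventually_atTop_of_frequently_of_eventually_imp_succ hfreqA hstay
  obtain ⟨k, hkB, hkA⟩ := (hfreqB.and_eventually hevA).exists
  exact hAB _ hkA hkB

theorem tendsto_sInf_image_sub_of_tendsto_nhdsSet {ι E : Type*} [SeminormedAddCommGroup E]
    {l : Filter ι} {g : E → ℝ} (hg : ContinuousAt g 0) (hg0 : g 0 = 0)
    (hg_nonneg : ∀ x, 0 ≤ g x) {x : ι → E} {S : Set E} (hx : Tendsto x l (𝓝ˢ S)) :
    Tendsto (fun k => sInf ((fun Q => g (x k - Q)) '' S)) l (𝓝 0) := by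
  rw [Metric.tendsto_nhds]
  intro ε hε
  obtain ⟨δ, hδ, hgδ⟩ := Metric.continuousAt_iff.1 hg ε hε
  filter_upwards [hx (isOpen_thickening.mem_nhdsSet.2 (self_subset_thickening hδ S))] with k hk
  obtain ⟨q, hq, hdist⟩ := mem_thickening_iff.1 hk
  have hnonneg : ∀ y ∈ (fun Q => g (x k - Q)) '' S, 0 ≤ y := by
    rintro _ ⟨Q, -, rfl⟩
    exact hg_nonneg _
  have hgq : g (x k - q) < ε := by
    have := hgδ (x := x k - q) (by rwa [dist_zero_right, ← dist_eq_norm])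
    rwa [hg0, Real.dist_eq, sub_zero, abs_of_nonneg (hg_nonneg _)] at this
  rw [Real.dist_eq, sub_zero, abs_of_nonneg (Real.sInf_nonneg hnonneg)]
  exact (csInf_le ⟨0, hnonneg⟩ ⟨q, hq, rfl⟩).trans_lt hgq

section

variable {n : ℕ}

theorem trace_transpose_mul_self (X : Mat n) : (Xᵀ * X).trace = ∑ i, ∑ j, X i j ^ 2 := by
  simp only [trace, diag, mul_apply, transpose_apply, sq]
  exact Finset.sum_comm

theorem norm_le_frobNorm (X : Mat n) : ‖X‖ ≤ frobNorm X := by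
  refine (norm_le_iff (Real.sqrt_nonneg _)).2 fun i j => ?_
  rw [Real.norm_eq_abs, ← Real.sqrt_sq_eq_abs, trace_transpose_mul_self]
  refine Real.sqrt_le_sqrt ?_
  calc X i j ^ 2 ≤ ∑ j', X i j' ^ 2 :=
        Finset.single_le_sum (fun _ _ => sq_nonneg _) (Finset.mem_univ j)
    _ ≤ ∑ i', ∑ j', X i' j' ^ 2 :=
        Finset.single_le_sum (f := fun i' => ∑ j', X i' j' ^ 2)
          (fun _ _ => Finset.sum_nonneg fun _ _ => sq_nonneg _) (Finset.mem_univ i)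

theorem frobNorm_nonneg (X : Mat n) : 0 ≤ frobNorm X := Real.sqrt_nonneg _

theorem frobNorm_zero : frobNorm (0 : Mat n) = 0 := by simp [frobNorm]

theorem continuous_frobNorm : Continuous (frobNorm : Mat n → ℝ) := by
  unfold frobNorm; fun_prop

theorem isClosed_projSet (N : ℕ) : IsClosed (projSet n N) := by
  simp only [projSet, IsSymm, Set.ofPred_and]
  refine .inter ?_ (.inter ?_ ?_) <;> exact isClosed_eq (by fun_prop) (by fun_prop)

theorem isCompact_projSet (N : ℕ) : IsCompact (projSet n N) := by
  refine (isCompact_closedBall (0 : Mat n) (Real.sqrt N)).of_isClosed_subset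
    (isClosed_projSet N) fun P ⟨hPsymm, hPidem, hPtr⟩ => ?_
  rw [mem_closedBall_zero_iff]
  calc ‖P‖ ≤ frobNorm P := norm_le_frobNorm P
    _ = Real.sqrt N := by rw [frobNorm, hPsymm, hPidem, hPtr]

theorem Matrix.IsSymm.trace_mul_single_add_single {G : Mat n} (hG : G.IsSymm) (i j : Fin n) :
    (G * (single i j 1 + single j i 1)).trace = 2 * G i j := by
  rw [mul_add, trace_add, trace_mul_single, trace_mul_single, hG.apply]
  simp only [MulOpposite.op_one, one_smul]
  ring

theorem continuous_of_fderiv_eq_trace_mul {E : Mat n → ℝ} (hE : Continuous (fderiv ℝ E))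
    {G : Mat n → Mat n} (hGsymm : ∀ P, (G P).IsSymm)
    (hG : ∀ P X : Mat n, X.IsSymm → fderiv ℝ E P X = (G P * X).trace) : Continuous G := by
  refine continuous_matrix fun i j => ?_
  have hsymm : (single i j (1 : ℝ) + single j i 1).IsSymm := by
    rw [IsSymm, transpose_add, transpose_single, transpose_single, add_comm]
  have hGij : (fun P => G P i j) = fun P => fderiv ℝ E P (single i j 1 + single j i 1) / 2 := by
    funext P
    rw [hG P _ hsymm, (hGsymm P).trace_mul_single_add_single]
    ring
  rw [hGij]
  exact (hE.clm_apply continuous_const).div_const 2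

theorem Continuous.piT {X : Type*} [TopologicalSpace X] {P G : X → Mat n}
    (hP : Continuous P) (hG : Continuous G) : Continuous fun x => piT (P x) (G x) := by
  unfold _root_.piT; fun_prop

end

theorem gradient_descent_converges_to_component_of_critical_set_general {Nb N : ℕ}
    (E : Mat Nb → ℝ) (hE : ContDiff ℝ 2 E)
    (gradE : Mat Nb → Mat Nb)
    (hgradsym : ∀ P : Mat Nb, (gradE P).IsSymm)
    (hgrad : ∀ (P X : Mat Nb), X.IsSymm → fderiv ℝ E P X = (gradE P * X).trace)
    (Pseq : ℕ → Mat Nb)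
    (hmem : ∀ k : ℕ, Pseq k ∈ projSet Nb N)
    (hres : Tendsto (fun k : ℕ => piT (Pseq k) (gradE (Pseq k))) atTop (nhds 0))
    (hstep : Tendsto (fun k : ℕ => frobNorm (Pseq (k + 1) - Pseq k)) atTop (nhds 0))
    (Ec : ℝ) (hEc : Tendsto (fun k : ℕ => E (Pseq k)) atTop (nhds Ec)) :
    ∃ Q0 ∈ {P : Mat Nb | P ∈ projSet Nb N ∧ E P = Ec ∧ piT P (gradE P) = 0},
      Tendsto
        (fun k : ℕ => sInf ((fun Q => frobNorm (Pseq k - Q)) ''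
          connectedComponentIn
            {P : Mat Nb | P ∈ projSet Nb N ∧ E P = Ec ∧ piT P (gradE P) = 0} Q0))
        atTop (nhds 0) := by
  set L := {Q | MapClusterPt Q atTop Pseq}
  have hK : IsCompact (projSet Nb N) := isCompact_projSet N
  have hgradE : Continuous gradE :=
    continuous_of_fderiv_eq_trace_mul (hE.continuous_fderiv (by norm_num)) hgradsym hgrad
  have hL_crit : L ⊆ {P | P ∈ projSet Nb N ∧ E P = Ec ∧ piT P (gradE P) = 0} := fun Q hQ =>
    ⟨(isClosed_projSet N).mem_of_mapClusterPt hQ (.of_forall hmem),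
      hQ.apply_eq_of_tendsto hE.continuous.continuousAt hEc,
      hQ.apply_eq_of_tendsto (continuous_id.piT hgradE).continuousAt hres⟩
  obtain ⟨Q0, -, hQ0⟩ :=
    hK.exists_mapClusterPt (f := atTop) (u := Pseq) (tendsto_principal.2 (.of_forall hmem))
  have hdist : Tendsto (fun k => dist (Pseq (k + 1)) (Pseq k)) atTop (𝓝 0) :=
    squeeze_zero (fun _ => dist_nonneg)
      (fun k => (dist_eq_norm _ _).trans_le (norm_le_frobNorm _)) hstep
  have hL_comp : L ⊆ connectedComponentIn _ Q0 :=
    (isPreconnected_setOf_mapClusterPt_of_tendsto_dist_succ hK hmem hdist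
      ).subset_connectedComponentIn hQ0 hL_crit
  refine ⟨Q0, hL_crit hQ0, tendsto_sInf_image_sub_of_tendsto_nhdsSet
    continuous_frobNorm.continuousAt frobNorm_zero frobNorm_nonneg ?_⟩
  exact (hK.tendsto_nhdsSet_setOf_mapClusterPt hmem).mono_right (nhdsSet_mono hL_comp)

/-- the gradient-descent iterates approach a connected component of the
critical set `C(E_c) = {P ∈ 𝓜_N : E(P) = E_c, Π_P∇E(P) = 0}`, where `E_c` is the limit
of the (nonincreasing) energies. The hypotheses `hdec`, `hres`, `hstep`, `hmem` are the
conclusions guaranteed by the global energy-decrease result for `0 < β ≤ β₀`. -/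
theorem gradient_descent_converges_to_component_of_critical_set {Nb N : ℕ}
    (E : Mat Nb → ℝ) (hE : ContDiff ℝ 2 E)
    (gradE : Mat Nb → Mat Nb)
    (hgradsym : ∀ P : Mat Nb, (gradE P).IsSymm)
    (hgrad : ∀ (P X : Mat Nb), X.IsSymm → fderiv ℝ E P X = (gradE P * X).trace)
    (R : Mat Nb → Mat Nb) (hR : ContDiff ℝ 2 R)
    (c C : ℝ) (hc : 0 < c) (hC : 0 < C)
    (hret : ∀ P ∈ projSet Nb N, ∀ X : Mat Nb, frobNorm X ≤ c →
      R (P + X) ∈ projSet Nb N ∧ frobNorm (R (P + X) - P - piT P X) ≤ C * frobNorm X ^ 2)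
    (β : ℝ) (hβ : 0 < β)
    (P0 : Mat Nb) (hP0 : P0 ∈ projSet Nb N)
    (Pseq : ℕ → Mat Nb) (hinit : Pseq 0 = P0)
    (hrec : ∀ k : ℕ, Pseq (k + 1) = R (Pseq k - β • piT (Pseq k) (gradE (Pseq k))))
    (hmem : ∀ k : ℕ, Pseq k ∈ projSet Nb N)
    (hdec : ∀ k : ℕ, E (Pseq (k + 1)) ≤
      E (Pseq k) - β / 2 * frobNorm (piT (Pseq k) (gradE (Pseq k))) ^ 2)
    (hres : Tendsto (fun k : ℕ => piT (Pseq k) (gradE (Pseq k))) atTop (nhds 0))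
    (hstep : Tendsto (fun k : ℕ => frobNorm (Pseq (k + 1) - Pseq k)) atTop (nhds 0))
    (Ec : ℝ) (hEc : Tendsto (fun k : ℕ => E (Pseq k)) atTop (nhds Ec)) :
    ∃ Q0 ∈ {P : Mat Nb | P ∈ projSet Nb N ∧ E P = Ec ∧ piT P (gradE P) = 0},
      Tendsto
        (fun k : ℕ => sInf ((fun Q => frobNorm (Pseq k - Q)) ''
          connectedComponentIn
            {P : Mat Nb | P ∈ projSet Nb N ∧ E P = Ec ∧ piT P (gradE P) = 0} Q0))
        atTop (nhds 0) :=
  gradient_descent_converges_to_component_of_critical_set_general E hE gradE hgradsym hgrad Pseq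
    hmem hres hstep Ec hEc
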